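/- arXiv:2301.06905 — 5 statements merged into one kernel-verified Lean document; each statement's English description precedes it below -/
import Mathlib

section
/- Let X be an integer-valued random variable whose distribution is symmetric (X and −X have the same law) and log-concave over the integers, i.e., P(X = k)² ≥ P(X = k−1)·P(X = k+1) for all k ∈ ℤ, and with P(X=k) > 0 for all k. If the variance of X tends to infinity along a sequence of such random variables X_n, then for every fixed N, P(|X_n| ≤ N) → 0 as n → ∞. -/
/-!
Log-concavity says that the increments `log p (k + 1) - log p k` are antitone; with symmetry
this makes `p` decrease in `|k|` and submultiplicative, `p (a + b) * p 0 ≤ p a * p b`.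
Since `(2m + 1) p m ≤ 1`, a block length `m ≈ 4 / p 0` gives `p m ≤ p 0 / 8`, hence
`p (j m) ≤ 8⁻ʲ p 0`, and summing `k² p k` block by block bounds the second moment by
`500 / p 0 ²`. A diverging variance therefore forces `p 0 → 0`, and
`P(|X| ≤ N) ≤ (2N + 1) p 0`.
-/

open Filter Topology
open scoped ENNReal

theorem ENNReal.tsum_int_le_two_mul_tsum_nat {f : ℤ → ℝ≥0∞} (hf : ∀ k, f (-k) = f k) :
    ∑' k, f k ≤ 2 * ∑' n : ℕ, f n :=
  calc ∑' k, f k ≤ ∑' k, f k + f 0 := le_self_add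
    _ = ∑' n : ℕ, (f n + f (-n)) := (tsum_nat_add_neg ENNReal.summable).symm
    _ = 2 * ∑' n : ℕ, f n := by simp_rw [hf, ← two_mul]; exact ENNReal.tsum_mul_left

theorem ENNReal.tsum_comp_div (m : ℕ) [NeZero m] (g : ℕ → ℝ≥0∞) :
    ∑' k, g (k / m) = m * ∑' j, g j := by
  rw [← (Nat.divModEquiv m).symm.tsum_eq, ENNReal.tsum_prod', ← ENNReal.tsum_mul_left]
  refine tsum_congr fun j => ?_
  have hdiv (i : Fin m) : (j * m + i) / m = j := by
    rw [Nat.add_comm, Nat.add_mul_div_right _ _ (NeZero.pos m), Nat.div_eq_of_lt i.2, zero_add]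
  simp [hdiv]

theorem Int.card_Icc_neg_self (N : ℕ) : (Finset.Icc (-(N : ℤ)) N).card = 2 * N + 1 := by
  rw [Int.card_Icc]; omega

section
variable {p : ℤ → ℝ}

theorem antitone_log_succ_sub_log (hpos : ∀ k, 0 < p k)
    (hlc : ∀ k, p (k - 1) * p (k + 1) ≤ p k ^ 2) :
    Antitone fun k => Real.log (p (k + 1)) - Real.log (p k) := by
  refine antitone_int_of_succ_le fun k => ?_
  have h := Real.log_le_log (mul_pos (hpos _) (hpos _)) (hlc (k + 1))
  rw [Real.log_mul (hpos _).ne' (hpos _).ne', Real.log_pow, add_sub_cancel_right] at h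
  push_cast at h
  linarith

theorem antitone_apply_natCast (hpos : ∀ k, 0 < p k)
    (hlc : ∀ k, p (k - 1) * p (k + 1) ≤ p k ^ 2) (hsymm : ∀ k, p (-k) = p k) :
    Antitone fun n : ℕ => p n := by
  have hanti := antitone_log_succ_sub_log hpos hlc
  -- By symmetry the increment at `-1` is minus the one at `0`, so the latter is `≤ 0`.
  have h0 : Real.log (p 1) - Real.log (p 0) ≤ 0 := by
    have := hanti (show (-1 : ℤ) ≤ 0 by norm_num)
    simp only [neg_add_cancel, zero_add, hsymm] at this
    linarith
  refine antitone_nat_of_succ_le fun n => ?_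
  have hn := (hanti (Int.natCast_nonneg n)).trans h0
  push_cast
  exact (Real.log_le_log_iff (hpos _) (hpos _)).1 (by linarith)

theorem apply_le_apply_of_natAbs_le (hpos : ∀ k, 0 < p k)
    (hlc : ∀ k, p (k - 1) * p (k + 1) ≤ p k ^ 2) (hsymm : ∀ k, p (-k) = p k) {k l : ℤ}
    (hkl : k.natAbs ≤ l.natAbs) : p l ≤ p k := by
  have habs (k : ℤ) : p k = p k.natAbs := by
    rcases Int.natAbs_eq k with h | h
    · rw [← h]
    · rw [h, hsymm, Int.natAbs_neg, Int.natAbs_natCast]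
  rw [habs k, habs l]
  exact antitone_apply_natCast hpos hlc hsymm hkl

theorem apply_add_mul_apply_zero_le (hpos : ∀ k, 0 < p k)
    (hlc : ∀ k, p (k - 1) * p (k + 1) ≤ p k ^ 2) (a b : ℕ) :
    p (a + b) * p 0 ≤ p a * p b := by
  rw [← Real.log_le_log_iff (mul_pos (hpos _) (hpos _)) (mul_pos (hpos _) (hpos _)),
    Real.log_mul (hpos _).ne' (hpos _).ne', Real.log_mul (hpos _).ne' (hpos _).ne']
  induction b with
  | zero => simp
  | succ b ih =>
    have h := antitone_log_succ_sub_log hpos hlc (show (b : ℤ) ≤ a + b by omega)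
    push_cast at h ⊢
    rw [← add_assoc]
    linarith

theorem apply_mul_le_pow_mul (hpos : ∀ k, 0 < p k)
    (hlc : ∀ k, p (k - 1) * p (k + 1) ≤ p k ^ 2) {m : ℕ} {c : ℝ} (hm : p m ≤ c * p 0) (j : ℕ) :
    p (j * m : ℕ) ≤ c ^ j * p 0 := by
  induction j with
  | zero => simp
  | succ j ih =>
    refine le_of_mul_le_mul_right ?_ (hpos 0)
    calc p ((j + 1) * m : ℕ) * p 0 = p ((j * m : ℕ) + m) * p 0 := by push_cast; ring_nf
      _ ≤ p (j * m : ℕ) * p m := apply_add_mul_apply_zero_le hpos hlc _ _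
      _ ≤ c ^ j * p 0 * (c * p 0) := mul_le_mul ih hm (hpos _).le ((hpos _).le.trans ih)
      _ = c ^ (j + 1) * p 0 * p 0 := by ring

theorem two_mul_add_one_mul_le_sum_Icc (hpos : ∀ k, 0 < p k)
    (hlc : ∀ k, p (k - 1) * p (k + 1) ≤ p k ^ 2) (hsymm : ∀ k, p (-k) = p k) (N : ℕ) :
    (2 * N + 1) * p N ≤ ∑ k ∈ Finset.Icc (-(N : ℤ)) N, p k := by
  have := Finset.card_nsmul_le_sum (Finset.Icc (-(N : ℤ)) N) p (p N) fun k hk =>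
    apply_le_apply_of_natAbs_le hpos hlc hsymm (by rw [Finset.mem_Icc] at hk; omega)
  rw [Int.card_Icc_neg_self, nsmul_eq_mul] at this
  exact_mod_cast this

theorem sum_Icc_le_two_mul_add_one_mul (hpos : ∀ k, 0 < p k)
    (hlc : ∀ k, p (k - 1) * p (k + 1) ≤ p k ^ 2) (hsymm : ∀ k, p (-k) = p k) (N : ℕ) :
    ∑ k ∈ Finset.Icc (-(N : ℤ)) N, p k ≤ (2 * N + 1) * p 0 := by
  have := Finset.sum_le_card_nsmul (Finset.Icc (-(N : ℤ)) N) p (p 0) fun k _ =>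
    apply_le_apply_of_natAbs_le hpos hlc hsymm (by simp)
  rw [Int.card_Icc_neg_self, nsmul_eq_mul] at this
  exact_mod_cast this

theorem two_mul_add_one_mul_le_one (hpos : ∀ k, 0 < p k)
    (hlc : ∀ k, p (k - 1) * p (k + 1) ≤ p k ^ 2) (hsymm : ∀ k, p (-k) = p k)
    (hsum : HasSum p 1) (N : ℕ) : (2 * N + 1) * p N ≤ 1 :=
  (two_mul_add_one_mul_le_sum_Icc hpos hlc hsymm N).trans
    (sum_le_hasSum _ (fun k _ => (hpos k).le) hsum)

theorem exists_apply_le_inv_eight_mul (hpos : ∀ k, 0 < p k)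
    (hlc : ∀ k, p (k - 1) * p (k + 1) ≤ p k ^ 2) (hsymm : ∀ k, p (-k) = p k)
    (hsum : HasSum p 1) : ∃ m : ℕ, 0 < m ∧ (m : ℝ) ≤ 5 / p 0 ∧ p m ≤ 8⁻¹ * p 0 := by
  have hp0 := hpos 0
  have hp1 : p 0 ≤ 1 := by simpa using two_mul_add_one_mul_le_one hpos hlc hsymm hsum 0
  have hm : 4 / p 0 ≤ ⌈4 / p 0⌉₊ := Nat.le_ceil _
  refine ⟨⌈4 / p 0⌉₊, Nat.ceil_pos.2 (by positivity), ?_, ?_⟩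
  · calc (⌈4 / p 0⌉₊ : ℝ) ≤ 4 / p 0 + 1 := (Nat.ceil_lt_add_one (by positivity)).le
      _ ≤ 4 / p 0 + 1 / p 0 := by gcongr; exact one_le_one_div hp0 hp1
      _ = 5 / p 0 := by ring
  · have hmass := two_mul_add_one_mul_le_one hpos hlc hsymm hsum ⌈4 / p 0⌉₊
    rw [div_le_iff₀ hp0] at hm
    nlinarith [hpos ⌈4 / p 0⌉₊]

theorem tsum_nat_sq_mul_le (hpos : ∀ k, 0 < p k)
    (hlc : ∀ k, p (k - 1) * p (k + 1) ≤ p k ^ 2) (hsymm : ∀ k, p (-k) = p k)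
    (hsum : HasSum p 1) :
    ∑' k : ℕ, ENNReal.ofReal ((k : ℝ) ^ 2 * p k) ≤ ENNReal.ofReal (250 / p 0 ^ 2) := by
  obtain ⟨m, hm0, hm5, hm8⟩ := exists_apply_le_inv_eight_mul hpos hlc hsymm hsum
  have : NeZero m := ⟨hm0.ne'⟩
  have hp0 := hpos 0
  have hterm (k : ℕ) : (k : ℝ) ^ 2 * p k ≤ m ^ 2 * p 0 * 2⁻¹ ^ (k / m) := by
    set j := k / m
    have hk : (k : ℝ) ≤ (j + 1) * m := by
      have := (Nat.lt_div_mul_add (a := k) hm0).le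
      push_cast [add_mul, one_mul]
      exact_mod_cast this
    have hj : ((j : ℝ) + 1) ^ 2 ≤ 4 ^ j := by
      have : (j : ℝ) + 1 ≤ 2 ^ j := by exact_mod_cast Nat.lt_two_pow_self
      calc ((j : ℝ) + 1) ^ 2 ≤ (2 ^ j) ^ 2 := by gcongr
        _ = 4 ^ j := by rw [← pow_mul, mul_comm, pow_mul]; norm_num
    have hp : p k ≤ 8⁻¹ ^ j * p 0 :=
      (antitone_apply_natCast hpos hlc hsymm (Nat.div_mul_le_self k m)).trans
        (apply_mul_le_pow_mul hpos hlc hm8 j)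
    calc (k : ℝ) ^ 2 * p k ≤ ((j + 1) * m) ^ 2 * (8⁻¹ ^ j * p 0) := by
          gcongr; exact (hpos _).le
      _ = (j + 1) ^ 2 * 8⁻¹ ^ j * (m ^ 2 * p 0) := by ring
      _ ≤ 4 ^ j * 8⁻¹ ^ j * (m ^ 2 * p 0) := by gcongr
      _ = m ^ 2 * p 0 * 2⁻¹ ^ j := by rw [← mul_pow]; norm_num; ring
  calc ∑' k : ℕ, ENNReal.ofReal ((k : ℝ) ^ 2 * p k)
      ≤ ∑' k : ℕ, ENNReal.ofReal (m ^ 2 * p 0) * 2⁻¹ ^ (k / m) := by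
        refine ENNReal.tsum_le_tsum fun k => (ENNReal.ofReal_le_ofReal (hterm k)).trans_eq ?_
        rw [ENNReal.ofReal_mul (by positivity), ENNReal.ofReal_pow (by norm_num),
          ENNReal.ofReal_inv_of_pos (by norm_num), ENNReal.ofReal_ofNat]
    _ = ENNReal.ofReal (2 * m ^ 3 * p 0) := by
        rw [ENNReal.tsum_comp_div m fun j => ENNReal.ofReal (m ^ 2 * p 0) * 2⁻¹ ^ j,
          ENNReal.tsum_mul_left, ENNReal.tsum_geometric, ENNReal.one_sub_inv_two, inv_inv,
          ← ENNReal.ofReal_natCast, ← ENNReal.ofReal_ofNat 2, ← ENNReal.ofReal_mul (by positivity),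
          ← ENNReal.ofReal_mul (by positivity)]
        ring_nf
    _ ≤ ENNReal.ofReal (250 / p 0 ^ 2) := by
        refine ENNReal.ofReal_le_ofReal ?_
        calc 2 * (m : ℝ) ^ 3 * p 0 ≤ 2 * (5 / p 0) ^ 3 * p 0 := by gcongr
          _ = 250 / p 0 ^ 2 := by field_simp; ring

theorem tsum_int_sq_mul_le (hpos : ∀ k, 0 < p k)
    (hlc : ∀ k, p (k - 1) * p (k + 1) ≤ p k ^ 2) (hsymm : ∀ k, p (-k) = p k)
    (hsum : HasSum p 1) :
    ∑' k : ℤ, ENNReal.ofReal ((k : ℝ) ^ 2 * p k) ≤ ENNReal.ofReal (500 / p 0 ^ 2) :=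
  calc ∑' k : ℤ, ENNReal.ofReal ((k : ℝ) ^ 2 * p k)
      ≤ 2 * ∑' n : ℕ, ENNReal.ofReal ((n : ℝ) ^ 2 * p n) :=
        ENNReal.tsum_int_le_two_mul_tsum_nat fun k => by simp [hsymm]
    _ ≤ 2 * ENNReal.ofReal (250 / p 0 ^ 2) := by
        gcongr; exact tsum_nat_sq_mul_le hpos hlc hsymm hsum
    _ = ENNReal.ofReal (500 / p 0 ^ 2) := by
        rw [← ENNReal.ofReal_ofNat 2, ← ENNReal.ofReal_mul (by norm_num)]
        ring_nf

end

/-- If `p n` is a sequence of symmetric, log-concave, everywhere positive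
probability distributions on `ℤ` whose variances tend to infinity, then for
every fixed `N`, the probability `P(|X_n| ≤ N)` tends to `0`. -/
theorem logConcave_var_blowup (p : ℕ → ℤ → ℝ)
    (hpos : ∀ n k, 0 < p n k)
    (hsum : ∀ n, HasSum (p n) 1)
    (hsymm : ∀ n k, p n (-k) = p n k)
    (hlogconcave : ∀ n k, p n (k - 1) * p n (k + 1) ≤ (p n k) ^ 2)
    (hvar : Tendsto (fun n => ∑' k : ℤ, ENNReal.ofReal ((k : ℝ) ^ 2 * p n k))
      atTop (nhds ⊤)) :
    ∀ N : ℕ, Tendsto (fun n => ∑ k ∈ Finset.Icc (-(N : ℤ)) (N : ℤ), p n k)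
      atTop (nhds 0) := by
  intro N
  have hp0 : Tendsto (fun n => p n 0) atTop (𝓝 0) := by
    refine tendsto_order.2 ⟨fun a ha => .of_forall fun n => ha.trans (hpos n 0), fun ε hε => ?_⟩
    filter_upwards [hvar.eventually (lt_mem_nhds (ENNReal.ofReal_lt_top (r := 500 / ε ^ 2)))]
      with n hn
    by_contra! hle
    refine ((tsum_int_sq_mul_le (hpos n) (hlogconcave n) (hsymm n) (hsum n)).trans ?_).not_gt hn
    gcongr
  refine squeeze_zero (fun n => Finset.sum_nonneg fun k _ => (hpos n k).le)
    (fun n => sum_Icc_le_two_mul_add_one_mul (hpos n) (hlogconcave n) (hsymm n) N) ?_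
  simpa using hp0.const_mul (2 * N + 1 : ℝ)
end

section
/- Let Z_a, Z_b be as follows: conditionally on a sigma-algebra G there are G-measurable finite index sets S_a, S_b and i.i.d. uniform random signs (ε_i) independent of G with Z_a = ∑_{i∈S_a} ε_i and Z_b = ∑_{i∈S_b} ε_i. Then E[sign(Z_a)·sign(Z_b)·1_{S_a ∩ S_b = ∅}] = 0, and consequently E[sign(Z_a) sign(Z_b)] ≤ P(S_a ∩ S_b ≠ ∅). -/
open MeasureTheory

lemma sum_sign_flip_zero {ι : Type*} [Fintype ι] [DecidableEq ι] (A B : Finset ι)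
    (hAB : A ∩ B = ∅) :
    ∑ s : ι → Bool, (((∑ i ∈ A, if s i then (1:ℤ) else -1).sign : ℤ) : ℝ) *
      (((∑ i ∈ B, if s i then (1:ℤ) else -1).sign : ℤ) : ℝ) = 0 := by
  classical
  set F : (ι → Bool) → ℝ := fun s =>
    (((∑ i ∈ A, if s i then (1:ℤ) else -1).sign : ℤ) : ℝ) *
      (((∑ i ∈ B, if s i then (1:ℤ) else -1).sign : ℤ) : ℝ) with hF
  set fl : (ι → Bool) → (ι → Bool) := fun s i => if i ∈ A then !s i else s i with hfl
  have hinv : Function.Involutive fl := by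
    intro s; funext i; by_cases h : i ∈ A <;> simp [hfl, h]
  have key : ∀ s, F (fl s) = -F s := by
    intro s
    have hA : (∑ i ∈ A, if fl s i then (1:ℤ) else -1)
        = -∑ i ∈ A, if s i then (1:ℤ) else -1 := by
      rw [← Finset.sum_neg_distrib]
      refine Finset.sum_congr rfl fun i hi => ?_
      simp only [hfl, if_pos hi]
      cases s i <;> simp
    have hB : (∑ i ∈ B, if fl s i then (1:ℤ) else -1)
        = ∑ i ∈ B, if s i then (1:ℤ) else -1 := by
      refine Finset.sum_congr rfl fun i hi => ?_
      have : i ∉ A := fun hiA => by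
        have : i ∈ A ∩ B := Finset.mem_inter.2 ⟨hiA, hi⟩
        simp [hAB] at this
      simp [hfl, this]
    simp only [hF, hA, hB, Int.sign_neg]
    push_cast
    ring
  have h1 : ∑ s : ι → Bool, F (fl s) = ∑ s : ι → Bool, F s :=
    Equiv.sum_comp (hinv.toPerm fl) F
  have h2 : ∑ s : ι → Bool, F (fl s) = -∑ s : ι → Bool, F s := by
    simp only [key, Finset.sum_neg_distrib]
  linarith [h1, h2]

/-- With the same setup as the signed-count covariance lemma: if conditionally
on `G` the signs `ε i` are i.i.d. fair coin flips independent of `G` and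
`S_a, S_b` are `G`-measurable finite index sets, then
`E[sign(Z_a) sign(Z_b) 1_{S_a ∩ S_b = ∅}] = 0`, and consequently
`E[sign(Z_a) sign(Z_b)] ≤ P(S_a ∩ S_b ≠ ∅)`. -/
theorem sign_covariance_bound {Ω : Type*} (G : MeasurableSpace Ω) {mΩ : MeasurableSpace Ω}
    (P : Measure Ω) [IsProbabilityMeasure P]
    {ι : Type*} [Fintype ι] [DecidableEq ι]
    (hG : G ≤ mΩ)
    (Sa Sb : Ω → Finset ι)
    (hSa : @Measurable Ω (Finset ι) G ⊤ Sa)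
    (hSb : @Measurable Ω (Finset ι) G ⊤ Sb)
    (ε : ι → Ω → ℤ)
    (hεmeas : ∀ i, Measurable (ε i))
    (hεval : ∀ i ω, ε i ω = 1 ∨ ε i ω = -1)
    (hfair : ∀ A : Set Ω, MeasurableSet[G] A → ∀ σ : ι → ℤ,
      (∀ i, σ i = 1 ∨ σ i = -1) →
      P (A ∩ {ω | ∀ i, ε i ω = σ i}) = P A * (1 / 2) ^ (Fintype.card ι)) :
    (∫ ω in {ω | Sa ω ∩ Sb ω = ∅},
        (((∑ i ∈ Sa ω, ε i ω).sign : ℤ) : ℝ) * (((∑ i ∈ Sb ω, ε i ω).sign : ℤ) : ℝ) ∂P) = 0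
    ∧ ∫ ω, (((∑ i ∈ Sa ω, ε i ω).sign : ℤ) : ℝ) * (((∑ i ∈ Sb ω, ε i ω).sign : ℤ) : ℝ) ∂P
        ≤ (P {ω | (Sa ω ∩ Sb ω).Nonempty}).toReal := by
  classical
  letI : MeasurableSpace Ω := mΩ
  have hε' : ∀ i, Measurable[mΩ] (ε i) := fun i => hεmeas i
  set f : Ω → ℝ := fun ω =>
    (((∑ i ∈ Sa ω, ε i ω).sign : ℤ) : ℝ) * (((∑ i ∈ Sb ω, ε i ω).sign : ℤ) : ℝ) with hf
  set D : Set Ω := {ω | Sa ω ∩ Sb ω = ∅} with hDdef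
  -- measurability of sums
  have hmeas_sum : ∀ (S : Ω → Finset ι), @Measurable Ω (Finset ι) G ⊤ S →
      Measurable[mΩ] (fun ω => ∑ i ∈ S ω, ε i ω) := by
    intro S hS
    have heq : (fun ω => ∑ i ∈ S ω, ε i ω)
        = fun ω => ∑ i : ι, if i ∈ S ω then ε i ω else 0 := by
      funext ω
      rw [Finset.sum_ite_mem, Finset.univ_inter]
    rw [heq]
    refine Finset.measurable_sum _ fun i _ => Measurable.ite ?_ (hε' i) measurable_const
    have h1 : MeasurableSet[G] (S ⁻¹' {t : Finset ι | i ∈ t}) :=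
      hS MeasurableSpace.measurableSet_top
    exact hG _ h1
  have hfmeas : Measurable[mΩ] f := by
    refine Measurable.mul ?_ ?_
    · exact (measurable_from_top (f := fun x : ℤ => ((x.sign : ℤ) : ℝ))).comp
        (hmeas_sum Sa hSa)
    · exact (measurable_from_top (f := fun x : ℤ => ((x.sign : ℤ) : ℝ))).comp
        (hmeas_sum Sb hSb)
  -- f is bounded by 1
  have habs_sign : ∀ x : ℤ, |((x.sign : ℤ) : ℝ)| ≤ 1 := by
    intro x
    rcases lt_trichotomy x 0 with h | h | h
    · simp [Int.sign_eq_neg_one_of_neg h]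
    · simp [h]
    · simp [Int.sign_eq_one_of_pos h]
  have hfle : ∀ ω, |f ω| ≤ 1 := by
    intro ω
    rw [hf, abs_mul]
    exact mul_le_one₀ (habs_sign _) (abs_nonneg _) (habs_sign _)
  have hfint : Integrable f P := by
    refine (integrable_const (1 : ℝ)).mono' hfmeas.aestronglyMeasurable ?_
    exact ae_of_all _ fun ω => by simpa using hfle ω
  -- measurability of D
  have hEmeas : ∀ A B : Finset ι,
      MeasurableSet[G] ({ω | Sa ω = A} ∩ {ω | Sb ω = B}) := by
    intro A B
    have h1 : MeasurableSet[G] (Sa ⁻¹' {A}) := hSa MeasurableSpace.measurableSet_top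
    have h2 : MeasurableSet[G] (Sb ⁻¹' {B}) := hSb MeasurableSpace.measurableSet_top
    exact h1.inter h2
  have hDG : MeasurableSet[G] D := by
    have : D = ⋃ p ∈ (Finset.univ.filter
        (fun q : Finset ι × Finset ι => q.1 ∩ q.2 = ∅)),
        ({ω | Sa ω = p.1} ∩ {ω | Sb ω = p.2}) := by
      ext ω
      simp only [Set.mem_iUnion, Finset.mem_filter, Finset.mem_univ, true_and,
        Set.mem_inter_iff, Set.mem_setOf_eq, hDdef]
      constructor
      · intro h
        exact ⟨(Sa ω, Sb ω), h, rfl, rfl⟩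
      · rintro ⟨p, hp, h1, h2⟩
        rw [h1, h2]
        exact hp
    rw [this]
    exact (Finset.univ.filter _).measurableSet_biUnion fun p _ => hEmeas p.1 p.2
  have hD : MeasurableSet[mΩ] D := hG _ hDG
  -- atoms
  set sg : Bool → ℤ := fun b => if b then 1 else -1 with hsg
  set Atom : ((Finset ι × Finset ι) × (ι → Bool)) → Set Ω := fun p =>
    ({ω | Sa ω = p.1.1} ∩ {ω | Sb ω = p.1.2}) ∩ {ω | ∀ i, ε i ω = sg (p.2 i)} with hAtom
  set c : ((Finset ι × Finset ι) × (ι → Bool)) → ℝ := fun p =>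
    (((∑ i ∈ p.1.1, sg (p.2 i)).sign : ℤ) : ℝ) *
      (((∑ i ∈ p.1.2, sg (p.2 i)).sign : ℤ) : ℝ) with hc
  set T : Finset ((Finset ι × Finset ι) × (ι → Bool)) :=
    Finset.univ.filter (fun p => p.1.1 ∩ p.1.2 = ∅) with hT
  have hAtomMeas : ∀ p, MeasurableSet[mΩ] (Atom p) := by
    intro p
    refine MeasurableSet.inter (hG _ (hEmeas p.1.1 p.1.2)) ?_
    have heq : {ω | ∀ i, ε i ω = sg (p.2 i)} = ⋂ i, (ε i) ⁻¹' {sg (p.2 i)} := by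
      ext ω; simp [Set.mem_iInter]
    rw [heq]
    exact MeasurableSet.iInter fun i => (hε' i) (measurableSet_singleton _)
  -- membership in atoms determines p
  have hAtomEq : ∀ ω p, ω ∈ Atom p →
      p = ((Sa ω, Sb ω), fun i => decide (ε i ω = 1)) := by
    rintro ω ⟨⟨A, B⟩, s⟩ ⟨⟨h1, h2⟩, h3⟩
    simp only [Set.mem_setOf_eq] at h1 h2 h3
    refine Prod.ext (Prod.ext ?_ ?_) ?_ <;> simp only
    · exact h1.symm
    · exact h2.symm
    · funext i
      have := h3 i
      cases hs : s i <;> rw [hs] at this <;> simp [hsg] at this <;> simp [this]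
  have hAtomSelf : ∀ ω, ω ∈ Atom ((Sa ω, Sb ω), fun i => decide (ε i ω = 1)) := by
    intro ω
    refine ⟨⟨rfl, rfl⟩, fun i => ?_⟩
    rcases hεval i ω with h | h <;> simp [hsg, h]
  -- pointwise indicator identity
  have hpoint : ∀ ω, Set.indicator D f ω
      = ∑ p ∈ T, Set.indicator (Atom p) (fun _ => c p) ω := by
    intro ω
    set p0 : (Finset ι × Finset ι) × (ι → Bool) :=
      ((Sa ω, Sb ω), fun i => decide (ε i ω = 1)) with hp0
    by_cases hω : ω ∈ D
    · rw [Set.indicator_of_mem hω]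
      have hp0T : p0 ∈ T := by
        simp only [hT, Finset.mem_filter, Finset.mem_univ, true_and, hp0]
        exact hω
      rw [Finset.sum_eq_single_of_mem p0 hp0T
        (fun p _ hne => Set.indicator_of_notMem
          (fun hmem => hne (hAtomEq ω p hmem)) _)]
      rw [Set.indicator_of_mem (hAtomSelf ω)]
      have hsub : ∀ (S : Finset ι), ∑ i ∈ S, sg (p0.2 i) = ∑ i ∈ S, ε i ω := by
        intro S
        refine Finset.sum_congr rfl fun i _ => ?_
        rcases hεval i ω with h | h <;> simp [hp0, hsg, h]
      simp only [hc, hf, hp0]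
      rw [← hsub (Sa ω), ← hsub (Sb ω)]
    · rw [Set.indicator_of_notMem hω]
      refine (Finset.sum_eq_zero fun p hp => ?_).symm
      refine Set.indicator_of_notMem (fun hmem => hω ?_) _
      have := hAtomEq ω p hmem
      simp only [hT, Finset.mem_filter, Finset.mem_univ, true_and] at hp
      rw [this] at hp
      exact hp
    -- compute set integral over D
  have hcard : ∀ p : (Finset ι × Finset ι) × (ι → Bool),
      P (Atom p) = P ({ω | Sa ω = p.1.1} ∩ {ω | Sb ω = p.1.2}) * (1/2) ^ (Fintype.card ι) := by
    intro p
    exact hfair _ (hEmeas p.1.1 p.1.2) (fun i => sg (p.2 i))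
      (fun i => by cases p.2 i <;> simp [hsg])
  have hint0 : (∫ ω in D, f ω ∂P) = 0 := by
    rw [← integral_indicator (μ := P) hD]
    calc (∫ ω, Set.indicator D f ω ∂P)
        = ∫ ω, ∑ p ∈ T, Set.indicator (Atom p) (fun _ => c p) ω ∂P := by
          exact integral_congr_ae (ae_of_all _ hpoint)
      _ = ∑ p ∈ T, ∫ ω, Set.indicator (Atom p) (fun _ => c p) ω ∂P := by
          exact integral_finset_sum (μ := P) T fun p _ =>
            (integrable_const (c p)).indicator (hAtomMeas p)
      _ = ∑ p ∈ T, (P (Atom p)).toReal * c p := by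
          refine Finset.sum_congr rfl fun p _ => ?_
          rw [integral_indicator_const (μ := P) (c p) (hAtomMeas p)]
          simp [smul_eq_mul, measureReal_def]
      _ = 0 := by
          rw [hT, Finset.sum_filter, Fintype.sum_prod_type]
          refine Finset.sum_eq_zero fun q _ => ?_
          by_cases hq : q.1 ∩ q.2 = ∅
          · simp only [hq, if_true]
            have : ∀ s : ι → Bool, (P (Atom (q, s))).toReal * c (q, s)
                = (P ({ω | Sa ω = q.1} ∩ {ω | Sb ω = q.2})
                    * (1/2) ^ (Fintype.card ι)).toReal * c (q, s) := by
              intro s; rw [hcard (q, s)]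
            simp only [this]
            rw [← Finset.mul_sum]
            have : ∑ s : ι → Bool, c (q, s) = 0 := by
              have := sum_sign_flip_zero q.1 q.2 hq
              simpa [hc, hsg] using this
            rw [this, mul_zero]
          · simp [hq]
  refine ⟨hint0, ?_⟩
  have hsplit : (∫ ω in D, f ω ∂P) + (∫ ω in Dᶜ, f ω ∂P) = ∫ ω, f ω ∂P :=
    integral_add_compl (μ := P) hD hfint
  have hDc : Dᶜ = {ω | (Sa ω ∩ Sb ω).Nonempty} := by
    ext ω
    simp [hDdef, Finset.nonempty_iff_ne_empty]
  have hbound : (∫ ω in Dᶜ, f ω ∂P) ≤ (P Dᶜ).toReal := by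
    calc (∫ ω in Dᶜ, f ω ∂P) ≤ ∫ _ω in Dᶜ, (1 : ℝ) ∂P := by
          refine setIntegral_mono_on (μ := P) hfint.integrableOn (integrableOn_const (measure_ne_top P _))
            hD.compl (fun ω _ => le_trans (le_abs_self _) (hfle ω))
      _ = (P Dᶜ).toReal := by simp [measureReal_def]
  calc ∫ ω, f ω ∂P = (∫ ω in D, f ω ∂P) + (∫ ω in Dᶜ, f ω ∂P) := hsplit.symm
    _ = ∫ ω in Dᶜ, f ω ∂P := by rw [hint0, zero_add]
    _ ≤ (P Dᶜ).toReal := hbound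
    _ = (P {ω | (Sa ω ∩ Sb ω).Nonempty}).toReal := by rw [hDc]
end

section
/- Let (G, ≤) be a finite set P of 'cycles' equipped with a relation ⪯ defined from activation times as follows: η ⪯ η' iff there is a chain η = η⁰, η¹, …, ηⁿ = η' in P such that consecutive cycles share a vertex at which the activation time of the earlier cycle is at most that of the later one. Suppose ⪯ is a partial order on P (P is a 'proper cycle partition'). Then any two proper cycle partitions of the same finite set Π of Poisson edges are equal; i.e., the proper cycle partition is unique. -/
open scoped Classical

namespace BKT

/-- A Poisson edge: a directed edge of a graph on `V` decorated with a time. -/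
abbrev PEdge (V : Type*) := (V × V) × ℝ

variable {V : Type*}

/-- The edges of `Π` going out of `x`. -/
noncomputable def outEdges (Pi : Finset (PEdge V)) (x : V) : Finset (PEdge V) :=
  Pi.filter (fun e => e.1.1 = x)

/-- The edges of `Π` coming into `x`. -/
noncomputable def inEdges (Pi : Finset (PEdge V)) (x : V) : Finset (PEdge V) :=
  Pi.filter (fun e => e.1.2 = x)

/-- `Π` is balanced: at every vertex the in-degree equals the out-degree. -/
def Balanced (Pi : Finset (PEdge V)) : Prop :=
  ∀ x : V, (outEdges Pi x).card = (inEdges Pi x).card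

/-- All times of the Poisson edges of `Π` are distinct. -/
def DistinctTimes (Pi : Finset (PEdge V)) : Prop :=
  ∀ e ∈ Pi, ∀ e' ∈ Pi, e.2 = e'.2 → e = e'

/-- The edge `e` touches the vertex `x`. -/
def touches (e : PEdge V) (x : V) : Prop := e.1.1 = x ∨ e.1.2 = x

/-- The set of vertices incident to some edge of `η`. -/
noncomputable def verts (η : Finset (PEdge V)) : Finset V :=
  η.image (fun e => e.1.1) ∪ η.image (fun e => e.1.2)

/-- The edge set `η` is connected: no nontrivial split into two parts that do
not share a vertex. -/
def ConnectedEdges (η : Finset (PEdge V)) : Prop :=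
  ∀ s ⊆ η, s.Nonempty → s ≠ η →
    ∃ e ∈ s, ∃ e' ∈ η \ s, ∃ x : V, touches e x ∧ touches e' x

/-- `η` is a cycle: a nonempty connected set of Poisson edges in which every
visited vertex has in-degree and out-degree exactly one. -/
def IsCycle (η : Finset (PEdge V)) : Prop :=
  η.Nonempty ∧ ConnectedEdges η ∧
    ∀ x ∈ verts η, (outEdges η x).card = 1 ∧ (inEdges η x).card = 1

/-- `P` is a partition of `Π` into cycles. -/
def IsCyclePartition (Pi : Finset (PEdge V)) (P : Finset (Finset (PEdge V))) : Prop :=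
  (∀ η ∈ P, IsCycle η) ∧ (∀ η ∈ P, η ⊆ Pi) ∧
    (∀ η ∈ P, ∀ η' ∈ P, η ≠ η' → Disjoint η η') ∧
    (∀ e ∈ Pi, ∃ η ∈ P, e ∈ η)

/-- One step of the activation-time relation: `η` and `η'` share a vertex at
which the activation time of `η` is at most that of `η'`. -/
def stepRel (η η' : Finset (PEdge V)) : Prop :=
  ∃ e ∈ η, ∃ e' ∈ η', e.1.1 = e'.1.1 ∧ e.2 ≤ e'.2

/-- The relation `⪯` on a cycle partition `P`, generated by chains of cycles
in `P` with nondecreasing activation times at shared vertices. -/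
def precRel (P : Finset (Finset (PEdge V))) (η η' : Finset (PEdge V)) : Prop :=
  Relation.ReflTransGen (fun a b => a ∈ P ∧ b ∈ P ∧ stepRel a b) η η'

/-- `P` is a proper cycle partition of `Π`: a cycle partition on which `⪯`
is a partial order (i.e., antisymmetric). -/
def IsProperCyclePartition (Pi : Finset (PEdge V)) (P : Finset (Finset (PEdge V))) : Prop :=
  IsCyclePartition Pi P ∧
    ∀ η ∈ P, ∀ η' ∈ P, precRel P η η' → precRel P η' η → η = η'


/-! Walk along the edges of `Π`, always leaving a vertex by its earliest outgoing edge; the walk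
ends in a periodic orbit. In a proper cycle partition, the cycle carrying a step of the walk
precedes in `⪯` the cycle carrying the previous step, since that cycle also leaves the vertex,
and no earlier. Going once around the orbit, antisymmetry puts the whole orbit in one cycle of
the partition, and that cycle is the orbit itself, because the orbit already enters and leaves
each of its vertices. So every proper partition contains this orbit, which depends on `Π` alone;
remove it and induct. -/

open Finset Function

theorem _root_.Set.Finite.exists_mem_periodicPts {α : Type*} {f : α → α} {s : Set α}
    (hs : s.Finite) (hne : s.Nonempty) (hf : Set.MapsTo f s s) : ∃ y ∈ s, y ∈ periodicPts f := by
  obtain ⟨x, hx⟩ := hne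
  obtain ⟨m, n, hmn, heq⟩ :=
    hs.exists_lt_map_eq_of_forall_mem (f := fun k => f^[k] x) fun k => hf.iterate k hx
  refine ⟨f^[m] x, hf.iterate m hx, mk_mem_periodicPts (Nat.sub_pos_of_lt hmn) ?_⟩
  change f^[n - m] (f^[m] x) = f^[m] x
  rw [← iterate_add_apply, Nat.sub_add_cancel hmn.le, heq]

theorem _root_.Function.exists_apply_iterate_eq {α : Type*} {f : α → α} {x : α}
    (hx : x ∈ periodicPts f) (k : ℕ) : ∃ j, f (f^[j] x) = f^[k] x := by
  have hpos := minimalPeriod_pos_of_mem_periodicPts hx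
  refine ⟨k + minimalPeriod f x - 1, ?_⟩
  rw [← iterate_succ_apply' f, Nat.succ_eq_add_one, Nat.sub_add_cancel (by omega),
    iterate_add_minimalPeriod_eq]

theorem _root_.Function.exists_iterate_apply_iterate_eq {α : Type*} {f : α → α} {x : α}
    (hx : x ∈ periodicPts f) (k : ℕ) : ∃ j, f^[j] (f^[k] x) = x := by
  have hpos := minimalPeriod_pos_of_mem_periodicPts hx
  refine ⟨minimalPeriod f x * k - k, ?_⟩
  rw [← iterate_add_apply, Nat.sub_add_cancel (Nat.le_mul_of_pos_left k hpos)]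
  exact ((isPeriodicPt_minimalPeriod f x).mul_const k).eq

section Edges

variable {Pi η η' : Finset (PEdge V)} {e a b : PEdge V} {x : V}

theorem mem_outEdges : e ∈ outEdges Pi x ↔ e ∈ Pi ∧ e.1.1 = x := mem_filter

theorem mem_inEdges : e ∈ inEdges Pi x ↔ e ∈ Pi ∧ e.1.2 = x := mem_filter

theorem fst_mem_verts (he : e ∈ η) : e.1.1 ∈ verts η := mem_union_left _ (mem_image_of_mem _ he)

theorem snd_mem_verts (he : e ∈ η) : e.1.2 ∈ verts η := mem_union_right _ (mem_image_of_mem _ he)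

namespace IsCycle

theorem eq_of_fst_eq (hη : IsCycle η) (ha : a ∈ η) (hb : b ∈ η) (h : a.1.1 = b.1.1) : a = b :=
  card_le_one.mp (hη.2.2 _ (fst_mem_verts ha)).1.le a (mem_outEdges.mpr ⟨ha, rfl⟩) b
    (mem_outEdges.mpr ⟨hb, h.symm⟩)

theorem eq_of_snd_eq (hη : IsCycle η) (ha : a ∈ η) (hb : b ∈ η) (h : a.1.2 = b.1.2) : a = b :=
  card_le_one.mp (hη.2.2 _ (snd_mem_verts ha)).2.le a (mem_inEdges.mpr ⟨ha, rfl⟩) b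
    (mem_inEdges.mpr ⟨hb, h.symm⟩)

theorem exists_fst_eq_snd (hη : IsCycle η) (he : e ∈ η) : ∃ a ∈ η, a.1.1 = e.1.2 := by
  obtain ⟨a, ha⟩ := card_pos.mp ((hη.2.2 _ (snd_mem_verts he)).1 ▸ Nat.one_pos)
  exact ⟨a, mem_outEdges.mp ha⟩

theorem eq_of_subset (hη' : IsCycle η') (hsub : η ⊆ η') (hne : η.Nonempty)
    (hnext : ∀ e ∈ η, ∃ a ∈ η, a.1.1 = e.1.2) (hprev : ∀ e ∈ η, ∃ b ∈ η, b.1.2 = e.1.1) :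
    η = η' := by
  by_contra hne'
  obtain ⟨e, he, e', he', x, hex, he'x⟩ := hη'.2.1 η hsub hne hne'
  obtain ⟨he'η', he'η⟩ := mem_sdiff.mp he'
  have hout : ∃ a ∈ η, a.1.1 = x := by
    rcases hex with rfl | rfl
    · exact ⟨e, he, rfl⟩
    · exact hnext e he
  have hin : ∃ b ∈ η, b.1.2 = x := by
    rcases hex with rfl | rfl
    · exact hprev e he
    · exact ⟨e, he, rfl⟩
  rcases he'x with rfl | rfl
  · obtain ⟨a, ha, hax⟩ := hout
    exact he'η (hη'.eq_of_fst_eq (hsub ha) he'η' hax ▸ ha)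
  · obtain ⟨b, hb, hbx⟩ := hin
    exact he'η (hη'.eq_of_snd_eq (hsub hb) he'η' hbx ▸ hb)

end IsCycle

variable {P Q : Finset (Finset (PEdge V))}

namespace IsCyclePartition

theorem eq_empty (hP : IsCyclePartition ∅ P) : P = ∅ :=
  eq_empty_of_forall_notMem fun η hη =>
    notMem_empty _ (hP.2.1 η hη (hP.1 η hη).1.choose_spec)

theorem eq_of_mem (hP : IsCyclePartition Pi P) (hη : η ∈ P) (hη' : η' ∈ P) (he : e ∈ η)
    (he' : e ∈ η') : η = η' := by
  by_contra hne
  exact disjoint_left.mp (hP.2.2.1 η hη η' hη' hne) he he'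

theorem exists_fst_eq_snd (hP : IsCyclePartition Pi P) (he : e ∈ Pi) :
    ∃ a ∈ Pi, a.1.1 = e.1.2 := by
  obtain ⟨η, hη, heη⟩ := hP.2.2.2 e he
  obtain ⟨a, ha, hae⟩ := (hP.1 η hη).exists_fst_eq_snd heη
  exact ⟨a, hP.2.1 η hη ha, hae⟩

end IsCyclePartition

theorem precRel_mono (h : P ⊆ Q) (hηη' : precRel P η η') : precRel Q η η' :=
  Relation.ReflTransGen.mono (fun _ _ hab => ⟨h hab.1, h hab.2.1, hab.2.2⟩) _ _ hηη'

theorem IsProperCyclePartition.erase (hP : IsProperCyclePartition Pi P) (hη : η ∈ P) :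
    IsProperCyclePartition (Pi \ η) (P.erase η) := by
  obtain ⟨⟨hcyc, hsub, hdisj, hcov⟩, hanti⟩ := hP
  refine ⟨⟨fun ζ hζ => hcyc ζ (mem_of_mem_erase hζ), fun ζ hζ => ?_,
    fun ζ hζ ζ' hζ' => hdisj ζ (mem_of_mem_erase hζ) ζ' (mem_of_mem_erase hζ'), fun e he => ?_⟩,
    fun ζ hζ ζ' hζ' h h' => hanti ζ (mem_of_mem_erase hζ) ζ' (mem_of_mem_erase hζ')
      (precRel_mono (erase_subset η P) h) (precRel_mono (erase_subset η P) h')⟩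
  · obtain ⟨hne, hζ⟩ := mem_erase.mp hζ
    exact subset_sdiff.mpr ⟨hsub ζ hζ, hdisj ζ hζ η hη hne⟩
  · obtain ⟨hePi, heη⟩ := mem_sdiff.mp he
    obtain ⟨ζ, hζ, heζ⟩ := hcov e hePi
    exact ⟨ζ, mem_erase.mpr ⟨fun h => heη (h ▸ heζ), hζ⟩, heζ⟩

/-- The earliest edge of `Pi` leaving the head of `e`; junk value `e` if there is none. -/
noncomputable def greedyNext (Pi : Finset (PEdge V)) (e : PEdge V) : PEdge V :=
  if h : (outEdges Pi e.1.2).Nonempty then (exists_min_image _ (·.2) h).choose else e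

theorem greedyNext_spec (h : (outEdges Pi e.1.2).Nonempty) :
    greedyNext Pi e ∈ outEdges Pi e.1.2 ∧ ∀ a ∈ outEdges Pi e.1.2, (greedyNext Pi e).2 ≤ a.2 := by
  rw [greedyNext, dif_pos h]
  exact (exists_min_image _ _ h).choose_spec

theorem mapsTo_greedyNext (Pi : Finset (PEdge V)) : Set.MapsTo (greedyNext Pi) Pi Pi := by
  intro e he
  by_cases h : (outEdges Pi e.1.2).Nonempty
  · exact (mem_outEdges.mp (greedyNext_spec h).1).1
  · rwa [greedyNext, dif_neg h]

theorem greedyNext_fst (ha : a ∈ Pi) (hae : a.1.1 = e.1.2) : (greedyNext Pi e).1.1 = e.1.2 :=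
  (mem_outEdges.mp (greedyNext_spec ⟨a, mem_outEdges.mpr ⟨ha, hae⟩⟩).1).2

theorem greedyNext_le (ha : a ∈ Pi) (hae : a.1.1 = e.1.2) : (greedyNext Pi e).2 ≤ a.2 :=
  (greedyNext_spec ⟨a, mem_outEdges.mpr ⟨ha, hae⟩⟩).2 a (mem_outEdges.mpr ⟨ha, hae⟩)

theorem stepRel_greedyNext (hP : IsCyclePartition Pi P) (hη' : η' ∈ P) (he : e ∈ η')
    (hnext : greedyNext Pi e ∈ η) : stepRel η η' := by
  obtain ⟨a, ha, hae⟩ := (hP.1 η' hη').exists_fst_eq_snd he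
  have haPi := hP.2.1 η' hη' ha
  exact ⟨_, hnext, a, ha, (greedyNext_fst haPi hae).trans hae.symm, greedyNext_le haPi hae⟩

theorem precRel_of_greedyNext_iterate (hP : IsCyclePartition Pi P) (he : e ∈ Pi) (k : ℕ)
    (hη : η ∈ P) (hη' : η' ∈ P) (hk : (greedyNext Pi)^[k] e ∈ η) (he' : e ∈ η') :
    precRel P η η' := by
  induction k generalizing η with
  | zero => exact hP.eq_of_mem hη hη' hk he' ▸ .refl
  | succ k ih =>
    have hkPi : (greedyNext Pi)^[k] e ∈ Pi := (mapsTo_greedyNext Pi).iterate k he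
    obtain ⟨ζ, hζ, hkζ⟩ := hP.2.2.2 _ hkPi
    rw [iterate_succ_apply'] at hk
    exact .head ⟨hη, hζ, stepRel_greedyNext hP hζ hkζ hk⟩ (ih hζ hkζ)

noncomputable def greedyCycle (Pi : Finset (PEdge V)) (y : PEdge V) : Finset (PEdge V) :=
  Pi.filter fun e => ∃ k, (greedyNext Pi)^[k] y = e

variable {y : PEdge V}

theorem iterate_mem_greedyCycle (hyPi : y ∈ Pi) (k : ℕ) :
    (greedyNext Pi)^[k] y ∈ greedyCycle Pi y :=
  mem_filter.mpr ⟨(mapsTo_greedyNext Pi).iterate k hyPi, k, rfl⟩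

theorem greedyCycle_mem (hP : IsProperCyclePartition Pi P) (hyPi : y ∈ Pi)
    (hy : y ∈ periodicPts (greedyNext Pi)) : greedyCycle Pi y ∈ P := by
  obtain ⟨η, hη, hyη⟩ := hP.1.2.2.2 y hyPi
  have hsub : greedyCycle Pi y ⊆ η := by
    intro e he
    obtain ⟨hePi, k, rfl⟩ := mem_filter.mp he
    obtain ⟨j, hj⟩ := exists_iterate_apply_iterate_eq hy k
    obtain ⟨ζ, hζ, hkζ⟩ := hP.1.2.2.2 _ hePi
    have hζη := precRel_of_greedyNext_iterate hP.1 hyPi k hζ hη hkζ hyη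
    have hηζ := precRel_of_greedyNext_iterate hP.1 hePi j hη hζ (by rwa [hj]) hkζ
    exact hP.2 ζ hζ η hη hζη hηζ ▸ hkζ
  have hnext : ∀ e ∈ greedyCycle Pi y, ∃ a ∈ greedyCycle Pi y, a.1.1 = e.1.2 := by
    intro e he
    obtain ⟨hePi, k, rfl⟩ := mem_filter.mp he
    obtain ⟨a, ha, hae⟩ := hP.1.exists_fst_eq_snd hePi
    refine ⟨_, ?_, greedyNext_fst ha hae⟩
    rw [← iterate_succ_apply' (greedyNext Pi)]
    exact iterate_mem_greedyCycle hyPi _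
  have hprev : ∀ e ∈ greedyCycle Pi y, ∃ b ∈ greedyCycle Pi y, b.1.2 = e.1.1 := by
    intro e he
    obtain ⟨-, k, rfl⟩ := mem_filter.mp he
    obtain ⟨j, hj⟩ := exists_apply_iterate_eq hy k
    have hjPi := (mapsTo_greedyNext Pi).iterate j hyPi
    obtain ⟨a, ha, hae⟩ := hP.1.exists_fst_eq_snd hjPi
    exact ⟨_, iterate_mem_greedyCycle hyPi j, hj ▸ (greedyNext_fst ha hae).symm⟩
  rw [(hP.1.1 η hη).eq_of_subset hsub ⟨y, iterate_mem_greedyCycle hyPi 0⟩ hnext hprev]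
  exact hη

end Edges

theorem properCyclePartition_unique_general
    (Pi : Finset (PEdge V))
    (P Q : Finset (Finset (PEdge V)))
    (hP : IsProperCyclePartition Pi P) (hQ : IsProperCyclePartition Pi Q) :
    P = Q := by
  induction Pi using Finset.strongInduction generalizing P Q with
  | H Pi ih =>
  obtain rfl | hne := Pi.eq_empty_or_nonempty
  · rw [hP.1.eq_empty, hQ.1.eq_empty]
  obtain ⟨y, hyPi, hy⟩ :=
    Set.Finite.exists_mem_periodicPts Pi.finite_toSet hne (mapsTo_greedyNext Pi)
  have hηP := greedyCycle_mem hP hyPi hy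
  have hηQ := greedyCycle_mem hQ hyPi hy
  have hrest : P.erase (greedyCycle Pi y) = Q.erase (greedyCycle Pi y) :=
    ih _ (sdiff_ssubset (filter_subset _ Pi) ⟨y, iterate_mem_greedyCycle hyPi 0⟩) _ _
      (hP.erase hηP) (hQ.erase hηQ)
  rw [← insert_erase hηP, hrest, insert_erase hηQ]

/-- Uniqueness of the proper cycle partition: any two proper cycle partitions
of the same finite balanced set of Poisson edges with distinct times coincide. -/
theorem properCyclePartition_unique
    (Pi : Finset (PEdge V)) (hdist : DistinctTimes Pi) (hbal : Balanced Pi)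
    (P Q : Finset (Finset (PEdge V)))
    (hP : IsProperCyclePartition Pi P) (hQ : IsProperCyclePartition Pi Q) :
    P = Q :=
  properCyclePartition_unique_general Pi P Q hP hQ

end BKT
end

section
/- Let P be the unique proper cycle partition C(Π) of a finite balanced set Π of Poisson edges with local time bounds T : V → [0,∞) (every edge out of x has time in [0, T_x]). Define the time inversion Π̃ := {(xy, T_x − τ) : (xy, τ) ∈ Π}. Then C(Π̃) = {η̃ : η ∈ C(Π)}, where η̃ is the time inversion of η, and moreover for cycles η, η' ∈ C(Π): η̃ ⪯ η̃' in C(Π̃) if and only if η' ⪯ η in C(Π). -/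
open scoped Classical

namespace BKT

variable {V : Type*}

/-- Time inversion: the time `τ` of each edge out of `x` is replaced by `T x − τ`. -/
noncomputable def timeInv (T : V → ℝ) (Pi : Finset (PEdge V)) : Finset (PEdge V) :=
  Pi.image (fun e => (e.1, T e.1.1 - e.2))

/-- The edge-level time inversion map. -/
noncomputable def tiE (T : V → ℝ) (e : PEdge V) : PEdge V := (e.1, T e.1.1 - e.2)

lemma tiE_invol (T : V → ℝ) : Function.Involutive (tiE T) := by
  intro e; simp [tiE]

lemma tiE_inj (T : V → ℝ) : Function.Injective (tiE T) := (tiE_invol T).injective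

lemma timeInv_eq (T : V → ℝ) (s : Finset (PEdge V)) :
    timeInv T s = s.image (tiE T) := rfl

lemma timeInv_timeInv (T : V → ℝ) (s : Finset (PEdge V)) :
    timeInv T (timeInv T s) = s := by
  simp [timeInv_eq, Finset.image_image, (tiE_invol T).comp_self]

lemma timeInv_inj (T : V → ℝ) : Function.Injective (timeInv T (V := V)) := by
  intro s t h
  have := congrArg (timeInv T) h
  rwa [timeInv_timeInv, timeInv_timeInv] at this

lemma mem_timeInv (T : V → ℝ) {s : Finset (PEdge V)} {e : PEdge V} :
    e ∈ timeInv T s ↔ tiE T e ∈ s := by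
  constructor
  · rintro h
    rcases Finset.mem_image.1 h with ⟨a, ha, rfl⟩
    simpa [tiE] using ha
  · intro h
    have : tiE T (tiE T e) ∈ timeInv T s := Finset.mem_image_of_mem _ h
    simpa [tiE_invol T e] using this

lemma outEdges_timeInv (T : V → ℝ) (s : Finset (PEdge V)) (x : V) :
    outEdges (timeInv T s) x = timeInv T (outEdges s x) := by
  ext e
  simp [outEdges, mem_timeInv, Finset.mem_filter, tiE]

lemma inEdges_timeInv (T : V → ℝ) (s : Finset (PEdge V)) (x : V) :
    inEdges (timeInv T s) x = timeInv T (inEdges s x) := by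
  ext e
  simp [inEdges, mem_timeInv, Finset.mem_filter, tiE]

lemma card_timeInv (T : V → ℝ) (s : Finset (PEdge V)) :
    (timeInv T s).card = s.card :=
  Finset.card_image_of_injective _ (tiE_inj T)

lemma verts_timeInv (T : V → ℝ) (s : Finset (PEdge V)) :
    verts (timeInv T s) = verts s := by
  ext x
  simp [verts, timeInv_eq, Finset.image_image, tiE, Function.comp_def]

lemma touches_tiE (T : V → ℝ) (e : PEdge V) (x : V) :
    touches (tiE T e) x ↔ touches e x := Iff.rfl

lemma connected_timeInv (T : V → ℝ) {η : Finset (PEdge V)}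
    (h : ConnectedEdges η) : ConnectedEdges (timeInv T η) := by
  intro s hs hne hneq
  have hs' : timeInv T s ⊆ η := by
    intro e he
    have := mem_timeInv T |>.1 he
    have h2 := hs this
    have := mem_timeInv T |>.1 h2
    simpa [tiE_invol T e] using this
  have hne' : (timeInv T s).Nonempty := by
    rcases hne with ⟨e, he⟩; exact ⟨tiE T e, Finset.mem_image_of_mem _ he⟩
  have hneq' : timeInv T s ≠ η := by
    intro hEq
    apply hneq
    have := congrArg (timeInv T) hEq
    simpa [timeInv_timeInv] using this
  obtain ⟨e, he, e', he', x, hx, hx'⟩ := h (timeInv T s) hs' hne' hneq'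
  refine ⟨tiE T e, ?_, tiE T e', ?_, x, hx, hx'⟩
  · have := mem_timeInv T |>.1 he; exact this
  · rcases Finset.mem_sdiff.1 he' with ⟨h1, h2⟩
    refine Finset.mem_sdiff.2 ⟨Finset.mem_image_of_mem _ h1, ?_⟩
    intro hc
    exact h2 ((mem_timeInv T).2 (by simpa [tiE_invol T e'] using hc))

lemma isCycle_timeInv (T : V → ℝ) {η : Finset (PEdge V)}
    (h : IsCycle η) : IsCycle (timeInv T η) := by
  obtain ⟨h1, h2, h3⟩ := h
  refine ⟨?_, connected_timeInv T h2, ?_⟩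
  · rcases h1 with ⟨e, he⟩; exact ⟨tiE T e, Finset.mem_image_of_mem _ he⟩
  · intro x hx
    rw [verts_timeInv] at hx
    obtain ⟨ho, hi⟩ := h3 x hx
    constructor
    · rw [outEdges_timeInv, card_timeInv]; exact ho
    · rw [inEdges_timeInv, card_timeInv]; exact hi

lemma stepRel_timeInv (T : V → ℝ) (η η' : Finset (PEdge V)) :
    stepRel (timeInv T η) (timeInv T η') ↔ stepRel η' η := by
  constructor
  · rintro ⟨e, he, e', he', h1, h2⟩
    rcases Finset.mem_image.1 he with ⟨a, ha, rfl⟩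
    rcases Finset.mem_image.1 he' with ⟨a', ha', rfl⟩
    have hh : a.1.1 = a'.1.1 := h1
    refine ⟨a', ha', a, ha, hh.symm, ?_⟩
    have : T a.1.1 - a.2 ≤ T a'.1.1 - a'.2 := h2
    rw [← hh] at this
    linarith
  · rintro ⟨e', he', e, he, h1, h2⟩
    refine ⟨tiE T e, Finset.mem_image_of_mem _ he,
      tiE T e', Finset.mem_image_of_mem _ he', ?_, ?_⟩
    · exact (h1.symm : e.1.1 = e'.1.1)
    · show T e.1.1 - e.2 ≤ T e'.1.1 - e'.2
      rw [h1]
      linarith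

lemma rtg_flip {α : Type*} (g : α → α) {r r' : α → α → Prop}
    (h : ∀ a b, r a b → r' (g b) (g a)) :
    ∀ a b, Relation.ReflTransGen r a b → Relation.ReflTransGen r' (g b) (g a) := by
  intro a b hab
  induction hab with
  | refl => exact Relation.ReflTransGen.refl
  | tail _ hstep ih => exact Relation.ReflTransGen.head (h _ _ hstep) ih

/-- Time inversion commutes with the proper cycle partition and reverses the
order `⪯`: if `C(Π) = P` then `C(Π̃) = {η̃ : η ∈ P}`, and `η̃ ⪯ η̃'` in the
inverted partition iff `η' ⪯ η` in `P`. -/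
theorem timeInv_properCyclePartition
    (Pi : Finset (PEdge V)) (T : V → ℝ)
    (hT : ∀ e ∈ Pi, 0 ≤ e.2 ∧ e.2 ≤ T e.1.1)
    (hdist : DistinctTimes Pi) (hbal : Balanced Pi)
    (P : Finset (Finset (PEdge V))) (hP : IsProperCyclePartition Pi P) :
    IsProperCyclePartition (timeInv T Pi) (P.image (timeInv T)) ∧
      ∀ η ∈ P, ∀ η' ∈ P,
        (precRel (P.image (timeInv T)) (timeInv T η) (timeInv T η') ↔
          precRel P η' η) := by
  obtain ⟨⟨hcyc, hsub, hdisj, hcov⟩, hanti⟩ := hP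
  -- the key iff on precRel
  have key : ∀ η ∈ P, ∀ η' ∈ P,
      (precRel (P.image (timeInv T)) (timeInv T η) (timeInv T η') ↔ precRel P η' η) := by
    intro η hη η' hη'
    constructor
    · intro h
      have flip := rtg_flip (timeInv T)
        (r := fun a b => a ∈ P.image (timeInv T) ∧ b ∈ P.image (timeInv T) ∧ stepRel a b)
        (r' := fun a b => a ∈ P ∧ b ∈ P ∧ stepRel a b) ?_ _ _ h
      · unfold precRel
        rwa [timeInv_timeInv, timeInv_timeInv] at flip
      · rintro a b ⟨ha, hb, hs⟩
        have hga : timeInv T a ∈ P := by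
          rcases Finset.mem_image.1 ha with ⟨A, hA, rfl⟩
          rwa [timeInv_timeInv]
        have hgb : timeInv T b ∈ P := by
          rcases Finset.mem_image.1 hb with ⟨B, hB, rfl⟩
          rwa [timeInv_timeInv]
        refine ⟨hgb, hga, (stepRel_timeInv T b a).2 hs⟩
    · intro h
      exact rtg_flip (timeInv T)
        (r := fun a b => a ∈ P ∧ b ∈ P ∧ stepRel a b)
        (r' := fun a b => a ∈ P.image (timeInv T) ∧ b ∈ P.image (timeInv T) ∧ stepRel a b)
        (by
          rintro a b ⟨ha, hb, hs⟩
          exact ⟨Finset.mem_image_of_mem _ hb, Finset.mem_image_of_mem _ ha,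
            (stepRel_timeInv T b a).2 hs⟩) _ _ h
  refine ⟨⟨⟨?_, ?_, ?_, ?_⟩, ?_⟩, key⟩
  · -- cycles
    intro η hη
    rcases Finset.mem_image.1 hη with ⟨c, hc, rfl⟩
    exact isCycle_timeInv T (hcyc c hc)
  · -- subsets
    intro η hη
    rcases Finset.mem_image.1 hη with ⟨c, hc, rfl⟩
    intro e he
    rcases Finset.mem_image.1 he with ⟨a, ha, rfl⟩
    exact Finset.mem_image_of_mem _ (hsub c hc ha)
  · -- disjoint
    intro η hη η' hη' hne
    rcases Finset.mem_image.1 hη with ⟨c, hc, rfl⟩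
    rcases Finset.mem_image.1 hη' with ⟨c', hc', rfl⟩
    have hcc : c ≠ c' := fun h => hne (by rw [h])
    rw [timeInv_eq, timeInv_eq]
    exact (Finset.disjoint_image (tiE_inj T)).2 (hdisj c hc c' hc' hcc)
  · -- covering
    intro e he
    rcases Finset.mem_image.1 he with ⟨a, ha, rfl⟩
    obtain ⟨c, hc, hac⟩ := hcov a ha
    exact ⟨timeInv T c, Finset.mem_image_of_mem _ hc, Finset.mem_image_of_mem _ hac⟩
  · -- antisymmetry
    intro η hη η' hη' h1 h2
    rcases Finset.mem_image.1 hη with ⟨c, hc, rfl⟩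
    rcases Finset.mem_image.1 hη' with ⟨c', hc', rfl⟩
    have e1 := (key c hc c' hc').1 h1
    have e2 := (key c' hc' c hc).1 h2
    rw [hanti c hc c' hc' e2 e1]

end BKT
end

section
/- Fix a finite balanced set Π of Poisson edges and a vertex x. Define the walk ω started at x which repeatedly follows the unused outgoing Poisson edge of largest time from its current vertex, until all outgoing edges of x are used and the walk returns to x. Let η ∈ C(Π) be the cycle of the proper cycle partition containing the last outgoing edge from x used by ω. Then the set P ⊆ Π of Poisson edges traversed by ω equals the union of the up-set H := {η' ∈ C(Π) : η ⪯ η'}. -/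
open scoped Classical

namespace BKT

variable {V : Type*}

/-- The greedy exploration loop started at `x`: a nonempty walk along Poisson
edges of `Π`, using each edge at most once, starting and ending at `x`, which
at every step follows the not-yet-used outgoing Poisson edge of largest time,
and which exhausts all outgoing edges of `x`. -/
def IsGreedyLoop (Pi : Finset (PEdge V)) (x : V) (w : List (PEdge V)) : Prop :=
  w ≠ [] ∧ w.Nodup ∧ (∀ e ∈ w, e ∈ Pi) ∧
    (∀ e, w.head? = some e → e.1.1 = x) ∧
    (∀ e, w.getLast? = some e → e.1.2 = x) ∧
    w.Chain' (fun e e' => e.1.2 = e'.1.1) ∧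
    (∀ i : Fin w.length, ∀ f ∈ Pi, f.1.1 = (w.get i).1.1 →
      f ∉ w.take i → f.2 ≤ (w.get i).2) ∧
    outEdges Pi x ⊆ w.toFinset

/-!
The edge set `S` of the loop is balanced, being a closed trail, and greedy: at every vertex
its edges are later than the edges of `Π` it leaves unused. Together these make `S` a union of
cycles of `C(Π)`. Indeed, a cycle only partly covered by `S` is left by `S` at some vertex `v`,
and matching the edges of `S` out of and into `v` cycle by cycle produces another partly covered
cycle one `⪯`-step above it; antisymmetry of `⪯` on the finite set `C(Π)` forbids this.

Greediness and distinct times make this union upward closed for `⪯`, so it contains the up-set of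
`η`. Conversely, let the cycle `κ` contain the `i`-th edge of the loop and leave its head along
`d`. If `d` comes later in the loop, induct from there. Otherwise the `(i+1)`-st edge leaves the
same vertex after `d`, hence at an earlier time, which is a `⪯`-step from its cycle to `κ`. If the
`i`-th edge is the last one, `d` leaves `x` no later than `e*`, which gives the step `η ⪯ κ`.
-/

lemma mem_verts_fst {η : Finset (PEdge V)} {e : PEdge V} (he : e ∈ η) : e.1.1 ∈ verts η :=
  Finset.mem_union_left _ (Finset.mem_image_of_mem _ he)

lemma mem_verts_snd {η : Finset (PEdge V)} {e : PEdge V} (he : e ∈ η) : e.1.2 ∈ verts η :=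
  Finset.mem_union_right _ (Finset.mem_image_of_mem _ he)

namespace IsCycle

variable {η : Finset (PEdge V)}

lemma exists_fst_eq (hη : IsCycle η) {v : V} (hv : v ∈ verts η) : ∃ g ∈ η, g.1.1 = v := by
  obtain ⟨g, hg⟩ : (outEdges η v).Nonempty :=
    Finset.card_pos.mp (by rw [(hη.2.2 v hv).1]; exact one_pos)
  exact ⟨g, Finset.mem_filter.mp hg⟩

lemma exists_snd_eq (hη : IsCycle η) {v : V} (hv : v ∈ verts η) : ∃ g ∈ η, g.1.2 = v := by
  obtain ⟨g, hg⟩ : (inEdges η v).Nonempty :=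
    Finset.card_pos.mp (by rw [(hη.2.2 v hv).2]; exact one_pos)
  exact ⟨g, Finset.mem_filter.mp hg⟩

lemma eq_of_fst_eq_s14 (hη : IsCycle η) {g g' : PEdge V} (hg : g ∈ η) (hg' : g' ∈ η)
    (h : g.1.1 = g'.1.1) : g = g' :=
  Finset.card_le_one.mp (hη.2.2 _ (mem_verts_fst hg)).1.le _
    (Finset.mem_filter.mpr ⟨hg, rfl⟩) _ (Finset.mem_filter.mpr ⟨hg', h.symm⟩)

lemma eq_of_snd_eq_s14 (hη : IsCycle η) {g g' : PEdge V} (hg : g ∈ η) (hg' : g' ∈ η)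
    (h : g.1.2 = g'.1.2) : g = g' :=
  Finset.card_le_one.mp (hη.2.2 _ (mem_verts_snd hg)).2.le _
    (Finset.mem_filter.mpr ⟨hg, rfl⟩) _ (Finset.mem_filter.mpr ⟨hg', h.symm⟩)

lemma exists_succ_not_mem (hη : IsCycle η) {s : Finset (PEdge V)} (hs : s ⊆ η)
    (hsne : s.Nonempty) (hsη : s ≠ η) : ∃ e ∈ s, ∃ g ∈ η, g ∉ s ∧ g.1.1 = e.1.2 := by
  -- If `s` were closed under successors, then, since the edges of a cycle are determined by
  -- their tails and also by their heads, `s` would be closed under predecessors too.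
  by_contra! hclosed
  have hsub : s.image (·.1.2) ⊆ s.image (·.1.1) := by
    intro _ hv
    obtain ⟨e, he, rfl⟩ := Finset.mem_image.mp hv
    obtain ⟨g, hg, hge⟩ := hη.exists_fst_eq (mem_verts_snd (hs he))
    exact Finset.mem_image.mpr ⟨g, by_contra fun hgs => hclosed e he g hg hgs hge, hge⟩
  have hcard : (s.image (·.1.1)).card ≤ (s.image (·.1.2)).card := by
    rw [Finset.card_image_of_injOn fun g hg g' hg' h => hη.eq_of_fst_eq_s14 (hs hg) (hs hg') h,
      Finset.card_image_of_injOn fun g hg g' hg' h => hη.eq_of_snd_eq_s14 (hs hg) (hs hg') h]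
  have himage := Finset.eq_of_subset_of_card_le hsub hcard
  obtain ⟨e, he, g, hg, z, hez, hgz⟩ := hη.2.1 s hs hsne hsη
  obtain ⟨hgη, hgs⟩ := Finset.mem_sdiff.mp hg
  rcases hez with rfl | rfl <;> rcases hgz with hgz | hgz
  · exact hgs (hη.eq_of_fst_eq_s14 (hs he) hgη hgz.symm ▸ he)
  · obtain ⟨t, ht, hte⟩ :=
      Finset.mem_image.mp (himage ▸ Finset.mem_image_of_mem (fun e : PEdge V => e.1.1) he)
    exact hgs (hη.eq_of_snd_eq_s14 (hs ht) hgη (hte.trans hgz.symm) ▸ ht)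
  · exact hclosed e he g hgη hgs hgz
  · exact hgs (hη.eq_of_snd_eq_s14 (hs he) hgη hgz.symm ▸ he)

end IsCycle

def IsGreedySet (Pi S : Finset (PEdge V)) : Prop :=
  ∀ f ∈ Pi, f ∉ S → ∀ g ∈ S, f.1.1 = g.1.1 → f.2 ≤ g.2

namespace IsCyclePartition

variable {Pi S : Finset (PEdge V)} {P : Finset (Finset (PEdge V))}

lemma eq_of_mem_s14 (hP : IsCyclePartition Pi P) {κ κ' : Finset (PEdge V)} (hκ : κ ∈ P)
    (hκ' : κ' ∈ P) {e : PEdge V} (he : e ∈ κ) (he' : e ∈ κ') : κ = κ' :=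
  by_contra fun hne => Finset.disjoint_left.mp (hP.2.2.1 κ hκ κ' hκ' hne) he he'

lemma exists_fst_eq_not_subset (hP : IsCyclePartition Pi P) (hS : Balanced S) (hSPi : S ⊆ Pi)
    {μ : Finset (PEdge V)} (hμ : μ ∈ P) {e g : PEdge V} (he : e ∈ μ) (heS : e ∈ S)
    (hg : g ∈ μ) (hge : g.1.1 = e.1.2) (hgS : g ∉ S) :
    ∃ κ ∈ P, ∃ f ∈ κ, f ∈ S ∧ f.1.1 = e.1.2 ∧ ¬ κ ⊆ S := by
  -- Otherwise each out-edge of `S` at the head of `e` pairs, through its cycle, with an in-edge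
  -- of `S` there other than `e`, against the balance of `S`.
  by_contra! hfull
  have hpair : ∀ f ∈ outEdges S e.1.2,
      ∃ f' ∈ (inEdges S e.1.2).erase e, ∃ κ ∈ P, f ∈ κ ∧ f' ∈ κ := by
    intro f hf
    obtain ⟨hfS, hfv⟩ := Finset.mem_filter.mp hf
    obtain ⟨κ, hκ, hfκ⟩ := hP.2.2.2 f (hSPi hfS)
    obtain ⟨f', hf'κ, hf'v⟩ := (hP.1 κ hκ).exists_snd_eq (hfv ▸ mem_verts_fst hfκ)
    have hκS := hfull κ hκ f hfκ hfS hfv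
    refine ⟨f', Finset.mem_erase.mpr ⟨?_, Finset.mem_filter.mpr ⟨hκS hf'κ, hf'v⟩⟩, κ, hκ, hfκ, hf'κ⟩
    rintro rfl
    exact hgS (hκS (hP.eq_of_mem_s14 hμ hκ he hf'κ ▸ hg))
  choose! φ hφ κ hκ hfκ hφκ using hpair
  have hinj : Set.InjOn φ (outEdges S e.1.2) := by
    intro f hf f' hf' h
    have hκκ' := hP.eq_of_mem_s14 (hκ f hf) (hκ f' hf') (hφκ f hf) (h ▸ hφκ f' hf')
    exact (hP.1 _ (hκ f' hf')).eq_of_fst_eq_s14 (hκκ' ▸ hfκ f hf) (hfκ f' hf')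
      ((Finset.mem_filter.mp hf).2.trans (Finset.mem_filter.mp hf').2.symm)
  have hle := Finset.card_le_card_of_injOn φ hφ hinj
  have hein : e ∈ inEdges S e.1.2 := Finset.mem_filter.mpr ⟨heS, rfl⟩
  rw [Finset.card_erase_of_mem hein, hS] at hle
  have := Finset.card_pos.mpr ⟨e, hein⟩
  omega

lemma exists_stepRel_of_not_subset (hP : IsCyclePartition Pi P) (hS : Balanced S)
    (hSPi : S ⊆ Pi) (hgr : IsGreedySet Pi S) {μ : Finset (PEdge V)} (hμ : μ ∈ P)
    (hmeet : ∃ e ∈ μ, e ∈ S) (hμS : ¬ μ ⊆ S) :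
    ∃ κ ∈ P, ((∃ e ∈ κ, e ∈ S) ∧ ¬ κ ⊆ S) ∧ κ ≠ μ ∧ stepRel μ κ := by
  obtain ⟨e, he, heS⟩ := hmeet
  have hne : μ.filter (· ∈ S) ≠ μ := fun h => hμS (h ▸ fun f hf => (Finset.mem_filter.mp hf).2)
  obtain ⟨e, he, g, hgμ, hgs, hge⟩ := (hP.1 μ hμ).exists_succ_not_mem (Finset.filter_subset _ μ)
    ⟨e, Finset.mem_filter.mpr ⟨he, heS⟩⟩ hne
  obtain ⟨heμ, heS⟩ := Finset.mem_filter.mp he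
  have hgS : g ∉ S := fun h => hgs (Finset.mem_filter.mpr ⟨hgμ, h⟩)
  obtain ⟨κ, hκ, f, hfκ, hfS, hfv, hκS⟩ :=
    hP.exists_fst_eq_not_subset hS hSPi hμ heμ heS hgμ hge hgS
  refine ⟨κ, hκ, ⟨⟨f, hfκ, hfS⟩, hκS⟩, ?_, g, hgμ, f, hfκ, hge.trans hfv.symm,
    hgr g (hP.2.1 μ hμ hgμ) hgS f hfS (hge.trans hfv.symm)⟩
  rintro rfl
  exact hgS ((hP.1 κ hκ).eq_of_fst_eq_s14 hfκ hgμ (hfv.trans hge.symm) ▸ hfS)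

end IsCyclePartition

lemma _root_.Finset.exists_maximal_of_reflTransGen_antisymm {α : Type*} {r : α → α → Prop}
    {M : Finset α} (hM : M.Nonempty)
    (hanti : ∀ a ∈ M, ∀ b ∈ M, Relation.ReflTransGen r a b → Relation.ReflTransGen r b a → a = b) :
    ∃ a ∈ M, ∀ b ∈ M, r a b → b = a := by
  obtain ⟨a, ha, hmin⟩ :=
    M.exists_min_image (fun a => (M.filter (Relation.ReflTransGen r a)).card) hM
  refine ⟨a, ha, fun b hb hab => by_contra fun hba => (hmin b hb).not_gt (Finset.card_lt_card ?_)⟩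
  refine (Finset.ssubset_iff_of_subset fun c hc => ?_).mpr ⟨a, ?_, fun h => ?_⟩
  · obtain ⟨hcM, hbc⟩ := Finset.mem_filter.mp hc
    exact Finset.mem_filter.mpr ⟨hcM, .head hab hbc⟩
  · exact Finset.mem_filter.mpr ⟨ha, .refl⟩
  · exact hba (hanti a ha b hb (.single hab) (Finset.mem_filter.mp h).2).symm

section UpSet

variable {Pi S : Finset (PEdge V)} {P : Finset (Finset (PEdge V))}

theorem IsProperCyclePartition.subset_of_mem (hP : IsProperCyclePartition Pi P)
    (hS : Balanced S) (hSPi : S ⊆ Pi) (hgr : IsGreedySet Pi S) {κ : Finset (PEdge V)}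
    (hκ : κ ∈ P) {e : PEdge V} (he : e ∈ κ) (heS : e ∈ S) : κ ⊆ S := by
  by_contra hκS
  obtain ⟨μ, hμM, hmax⟩ := Finset.exists_maximal_of_reflTransGen_antisymm
    (M := P.filter fun μ => (∃ e ∈ μ, e ∈ S) ∧ ¬ μ ⊆ S)
    (r := fun a b => a ∈ P ∧ b ∈ P ∧ stepRel a b)
    ⟨κ, Finset.mem_filter.mpr ⟨hκ, ⟨e, he, heS⟩, hκS⟩⟩
    fun a ha b hb => hP.2 a (Finset.mem_filter.mp ha).1 b (Finset.mem_filter.mp hb).1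
  obtain ⟨hμ, hmeet, hμS⟩ := Finset.mem_filter.mp hμM
  obtain ⟨ν, hν, hνM, hne, hstep⟩ := hP.1.exists_stepRel_of_not_subset hS hSPi hgr hμ hmeet hμS
  exact hne (hmax ν (Finset.mem_filter.mpr ⟨hν, hνM⟩) ⟨hμ, hν, hstep⟩)

lemma subset_of_precRel (hdist : DistinctTimes Pi) (hP : IsCyclePartition Pi P)
    (hgr : IsGreedySet Pi S) (hunion : ∀ κ ∈ P, ∀ e ∈ κ, e ∈ S → κ ⊆ S)
    {η κ : Finset (PEdge V)} (hη : η ⊆ S) (h : precRel P η κ) : κ ⊆ S := by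
  induction h with
  | refl => exact hη
  | tail _ hstep ih =>
    obtain ⟨ha, hb, e, he, f, hf, hef, hle⟩ := hstep
    have hePi := hP.2.1 _ ha he
    have hfPi := hP.2.1 _ hb hf
    -- an unused `f` would tie in time with `e`
    refine hunion _ hb f hf (by_contra fun hfS => hfS ?_)
    rw [← hdist e hePi f hfPi (hle.antisymm (hgr f hfPi hfS e (ih he) hef.symm))]
    exact ih he

end UpSet

section Walk

variable {w : List (PEdge V)}

lemma map_fst_tail_eq_map_snd_dropLast (hchain : w.IsChain fun e e' => e.1.2 = e'.1.1) :
    (w.map (·.1.1)).tail = (w.map (·.1.2)).dropLast :=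
  List.ext_getElem (by simp) fun i hi _ => by
    simp only [List.length_tail, List.length_map] at hi
    simpa using (List.isChain_iff_getElem.mp hchain i (by omega)).symm

lemma balanced_toFinset_of_isChain {x : V} (hnd : w.Nodup)
    (hhead : ∀ e, w.head? = some e → e.1.1 = x) (hlast : ∀ e, w.getLast? = some e → e.1.2 = x)
    (hchain : w.IsChain fun e e' => e.1.2 = e'.1.1) : Balanced w.toFinset := by
  have hperm : (w.map (·.1.1)).Perm (w.map (·.1.2)) := by
    rcases eq_or_ne w [] with rfl | hne
    · rfl
    have hfst : w.map (·.1.1) = x :: (w.map (·.1.2)).dropLast := by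
      rw [← map_fst_tail_eq_map_snd_dropLast hchain, ← hhead _ (List.head?_eq_some_head hne)]
      cases w with
      | nil => contradiction
      | cons => rfl
    have hsnd : (w.map (·.1.2)).dropLast ++ [x] = w.map (·.1.2) := by
      have h := List.dropLast_append_getLast (l := w.map (·.1.2)) (by simpa using hne)
      rwa [List.getLast_map, hlast _ (List.getLast?_eq_some_getLast hne)] at h
    rw [hfst, ← hsnd, List.dropLast_concat]
    exact (List.perm_append_singleton _ _).symm
  intro v
  rw [outEdges, inEdges, hnd.card_eq_countP, hnd.card_eq_countP]
  simpa [List.countP_map, Function.comp_def] using hperm.countP_eq (· = v)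

end Walk

namespace IsGreedyLoop

variable {Pi : Finset (PEdge V)} {x : V} {w : List (PEdge V)}

lemma balanced (hw : IsGreedyLoop Pi x w) : Balanced w.toFinset :=
  balanced_toFinset_of_isChain hw.2.1 hw.2.2.2.1 hw.2.2.2.2.1 hw.2.2.2.2.2.1

lemma toFinset_subset (hw : IsGreedyLoop Pi x w) : w.toFinset ⊆ Pi :=
  fun e he => hw.2.2.1 e (List.mem_toFinset.mp he)

lemma isGreedySet (hw : IsGreedyLoop Pi x w) : IsGreedySet Pi w.toFinset := by
  intro f hf hfw g hg hfg
  obtain ⟨i, rfl⟩ := List.mem_iff_get.mp (List.mem_toFinset.mp hg)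
  exact hw.2.2.2.2.2.2.1 i f hf hfg fun h => hfw (List.mem_toFinset.mpr (List.take_subset _ _ h))

lemma snd_le_of_le (hw : IsGreedyLoop Pi x w) {i j : ℕ} (hij : i ≤ j) (hj : j < w.length)
    (h : w[j].1.1 = w[i].1.1) : w[j].2 ≤ w[i].2 := by
  refine hw.2.2.2.2.2.2.1 ⟨i, by omega⟩ w[j] (hw.2.2.1 _ (List.getElem_mem _)) h fun hmem => ?_
  obtain ⟨k, hk, hkj⟩ := List.mem_take_iff_getElem.mp hmem
  have hki : k < i := lt_of_lt_of_le hk (min_le_left _ _)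
  have := (hw.2.1.getElem_inj_iff).mp hkj
  omega

end IsGreedyLoop

section UpSetOfLoop

variable {Pi : Finset (PEdge V)} {P : Finset (Finset (PEdge V))} {x : V} {w : List (PEdge V)}
  {estar : PEdge V} {pre post : List (PEdge V)} {η : Finset (PEdge V)}

lemma le_length_of_getElem_fst_eq (hsplit : w = pre ++ estar :: post)
    (hlast : ∀ f ∈ post, f.1.1 ≠ x) {j : ℕ} (hj : j < w.length) (hjx : w[j].1.1 = x) :
    j ≤ pre.length := by
  subst hsplit
  by_contra! hlt
  simp only [List.length_append, List.length_cons] at hj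
  rw [List.getElem_append_right (by omega), List.getElem_cons (by simp; omega),
    dif_neg (by omega)] at hjx
  exact hlast _ (List.getElem_mem _) hjx

theorem IsGreedyLoop.precRel_of_getElem_mem (hw : IsGreedyLoop Pi x w)
    (hP : IsCyclePartition Pi P) (hunion : ∀ κ ∈ P, ∀ e ∈ κ, e ∈ w.toFinset → κ ⊆ w.toFinset)
    (hsplit : w = pre ++ estar :: post) (hestar : estar.1.1 = x) (hlast : ∀ f ∈ post, f.1.1 ≠ x)
    (hη : η ∈ P) (hmem : estar ∈ η) (i : ℕ) (hi : i < w.length) {κ : Finset (PEdge V)}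
    (hκ : κ ∈ P) (hiκ : w[i] ∈ κ) : precRel P η κ := by
  obtain ⟨d, hdκ, hd⟩ := (hP.1 κ hκ).exists_fst_eq (mem_verts_snd hiκ)
  obtain ⟨j, hj, rfl⟩ := List.getElem_of_mem
    (List.mem_toFinset.mp (hunion κ hκ _ hiκ (List.mem_toFinset.mpr (List.getElem_mem _)) hdκ))
  by_cases hnext : i + 1 < w.length
  · by_cases hij : i < j
    · exact hw.precRel_of_getElem_mem hP hunion hsplit hestar hlast hη hmem j hj hκ hdκ
    have hc : w[i].1.2 = w[i + 1].1.1 := List.isChain_iff_getElem.mp hw.2.2.2.2.2.1 i hnext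
    obtain ⟨μ, hμ, hcμ⟩ := hP.2.2.2 _ (hw.2.2.1 _ (List.getElem_mem hnext))
    refine (hw.precRel_of_getElem_mem hP hunion hsplit hestar hlast hη hmem (i + 1) hnext hμ
      hcμ).tail ⟨hμ, hκ, _, hcμ, _, hdκ, hc.symm.trans hd.symm, hw.snd_le_of_le (by omega) hnext
      (hc.symm.trans hd.symm)⟩
  · have hix : w[i].1.2 = x := hw.2.2.2.2.1 _ (by
      rw [List.getLast?_eq_getElem?, List.getElem?_eq_getElem (by omega)]
      congr
      omega)
    have hjx : w[j].1.1 = x := hd.trans hix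
    have hlen : pre.length < w.length := by simp [hsplit]
    have hestar' : w[pre.length] = estar := by simp [hsplit]
    refine .single ⟨hη, hκ, estar, hmem, _, hdκ, hestar.trans hjx.symm, ?_⟩
    rw [← hestar']
    exact hw.snd_le_of_le (le_length_of_getElem_fst_eq hsplit hlast hj hjx) hlen
      (by rw [hestar', hestar, hjx])
termination_by w.length - i

end UpSetOfLoop

theorem greedyLoop_eq_upSet_general
    (Pi : Finset (PEdge V)) (hdist : DistinctTimes Pi)
    (P : Finset (Finset (PEdge V))) (hP : IsProperCyclePartition Pi P)
    (x : V) (w : List (PEdge V)) (hw : IsGreedyLoop Pi x w)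
    (estar : PEdge V) (pre post : List (PEdge V))
    (hsplit : w = pre ++ estar :: post)
    (hestar : estar.1.1 = x)
    (hlast : ∀ f ∈ post, f.1.1 ≠ x)
    (η : Finset (PEdge V)) (hη : η ∈ P) (hmem : estar ∈ η) :
    w.toFinset = (P.filter (fun η' => precRel P η η')).sup id := by
  have hunion : ∀ κ ∈ P, ∀ e ∈ κ, e ∈ w.toFinset → κ ⊆ w.toFinset := fun κ hκ e he heS =>
    hP.subset_of_mem hw.balanced hw.toFinset_subset hw.isGreedySet hκ he heS
  have hestarw : estar ∈ w.toFinset := by simp [hsplit]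
  ext f
  simp only [Finset.mem_sup, Finset.mem_filter, id]
  constructor
  · intro hf
    obtain ⟨κ, hκ, hfκ⟩ := hP.1.2.2.2 f (hw.toFinset_subset hf)
    obtain ⟨i, hi, rfl⟩ := List.getElem_of_mem (List.mem_toFinset.mp hf)
    exact ⟨κ, ⟨hκ, hw.precRel_of_getElem_mem hP.1 hunion hsplit hestar hlast hη hmem i hi hκ hfκ⟩,
      hfκ⟩
  · rintro ⟨κ, ⟨hκ, hηκ⟩, hfκ⟩
    exact subset_of_precRel hdist hP.1 hw.isGreedySet hunion (hunion η hη estar hmem hestarw)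
      hηκ hfκ

/-- The edges traversed by the greedy exploration loop from `x` are exactly
the union of the up-set `{η' ∈ C(Π) : η ⪯ η'}` of the cycle `η` containing the
last outgoing edge from `x` used by the walk. -/
theorem greedyLoop_eq_upSet
    (Pi : Finset (PEdge V)) (hdist : DistinctTimes Pi) (hbal : Balanced Pi)
    (P : Finset (Finset (PEdge V))) (hP : IsProperCyclePartition Pi P)
    (x : V) (w : List (PEdge V)) (hw : IsGreedyLoop Pi x w)
    (estar : PEdge V) (pre post : List (PEdge V))
    (hsplit : w = pre ++ estar :: post)
    (hestar : estar.1.1 = x)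
    (hlast : ∀ f ∈ post, f.1.1 ≠ x)
    (η : Finset (PEdge V)) (hη : η ∈ P) (hmem : estar ∈ η) :
    w.toFinset = (P.filter (fun η' => precRel P η η')).sup id :=
  greedyLoop_eq_upSet_general Pi hdist P hP x w hw estar pre post hsplit hestar hlast η hη hmem

end BKT
end
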